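/- Let φ : A* → A* be a morphism over a finite alphabet A, and let b ∈ A with φ(b) = b·v for some non-empty word v such that φ^j(v) ≠ ε for all j. Then the infinite fixed point φ^ω(b) = b·v·φ(v)·φ²(v)·⋯ is purely periodic if and only if there exists a non-empty word z starting with b such that φ(z) = z^m for some m ≥ 2 and φ^ω(b) = z^ω. -/
import Mathlib

def wpow {A : Type*} (w : List A) (k : ℕ) : List A := (List.replicate k w).flatten

def WordHom {A : Type*} (φ : List A → List A) : Prop :=
  ∀ x y : List A, φ (x ++ y) = φ x ++ φ y

def perW {A : Type*} [Inhabited A] (z : List A) (i : ℕ) : A :=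
  z.getD (i % z.length) default

/-- Segments of the infinite fixed point `b·v·φ(v)·φ²(v)·⋯`. -/
def fpSeg {A : Type*} (φ : List A → List A) (b : A) (v : List A) : ℕ → List A
  | 0 => [b]
  | n + 1 => φ^[n] v

def fpPartial {A : Type*} (φ : List A → List A) (b : A) (v : List A) (n : ℕ) : List A :=
  ((List.range n).map (fpSeg φ b v)).flatten

/-- The infinite fixed point `φ^ω(b) = b·v·φ(v)·φ²(v)·⋯` as a function `ℕ → A`. -/
def fpWord {A : Type*} [Inhabited A] (φ : List A → List A) (b : A) (v : List A)
    (i : ℕ) : A :=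
  (fpPartial φ b v (i + 1)).getD i default

section Basic
variable {A : Type*} {φ : List A → List A} {b : A} {v : List A}

theorem hom_nil (hφ : WordHom φ) : φ [] = [] := by
  have := hφ [] []
  simpa using this.symm

theorem hom_prefix (hφ : WordHom φ) {u s : List A} (h : u <+: s) : φ u <+: φ s := by
  obtain ⟨t, rfl⟩ := h
  exact ⟨φ t, (hφ u t).symm⟩

theorem wpow_succ (z : List A) (k : ℕ) : wpow z (k+1) = z ++ wpow z k := by
  simp [wpow, List.replicate_succ]

theorem wpow_length (z : List A) (k : ℕ) : (wpow z k).length = k * z.length := by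
  induction k with
  | zero => simp [wpow]
  | succ k ih => rw [wpow_succ]; simp [ih, Nat.succ_mul]; ring

theorem hom_wpow (hφ : WordHom φ) (z : List A) (k : ℕ) : φ (wpow z k) = wpow (φ z) k := by
  induction k with
  | zero => simpa [wpow] using hom_nil hφ
  | succ k ih => rw [wpow_succ, hφ, ih, wpow_succ]

theorem seg_ne (himm : ∀ j : ℕ, φ^[j] v ≠ []) (n : ℕ) : fpSeg φ b v n ≠ [] := by
  cases n with
  | zero => simp [fpSeg]
  | succ n => exact himm n

theorem partial_succ (n : ℕ) :
    fpPartial φ b v (n+1) = fpPartial φ b v n ++ fpSeg φ b v n := by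
  simp [fpPartial, List.range_succ]

theorem partial_len (himm : ∀ j : ℕ, φ^[j] v ≠ []) (n : ℕ) :
    n ≤ (fpPartial φ b v n).length := by
  induction n with
  | zero => simp
  | succ n ih =>
      rw [partial_succ]
      have h1 : 1 ≤ (fpSeg φ b v n).length :=
        List.length_pos_iff.mpr (seg_ne himm n)
      simp only [List.length_append]
      omega

theorem partial_prefix {n m : ℕ} (h : n ≤ m) :
    fpPartial φ b v n <+: fpPartial φ b v m := by
  induction m with
  | zero => simp [Nat.le_zero.mp h]
  | succ m ih =>
      rcases Nat.lt_or_ge n (m+1) with h' | h'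
      · exact (ih (by omega)).trans (by rw [partial_succ]; exact List.prefix_append _ _)
      · have : n = m + 1 := by omega
        subst this; exact List.prefix_refl _

theorem phi_partial (hφ : WordHom φ) (hb : φ [b] = b :: v) (n : ℕ) :
    φ (fpPartial φ b v (n+1)) = fpPartial φ b v (n+2) := by
  induction n with
  | zero =>
      have h1 : fpPartial φ b v 1 = [b] := by
        simp [fpPartial, List.range_succ, fpSeg]
      have h2 : fpPartial φ b v 2 = [b] ++ v := by
        rw [partial_succ, h1]; simp [fpSeg]
      rw [h1, hb, h2]
      rfl
  | succ n ih =>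
      rw [partial_succ, hφ, ih, show n+1+2 = (n+2)+1 from rfl]
      conv_rhs => rw [partial_succ]
      congr 1
      show φ (φ^[n] v) = φ^[n+1] v
      rw [Function.iterate_succ_apply']

theorem iter_b (hφ : WordHom φ) (hb : φ [b] = b :: v) (n : ℕ) :
    φ^[n] [b] = fpPartial φ b v (n+1) := by
  induction n with
  | zero => simp [fpPartial, List.range_succ, fpSeg]
  | succ n ih => rw [Function.iterate_succ_apply', ih, phi_partial hφ hb]

end Basic

section Word
variable {A : Type*} [Inhabited A] {φ : List A → List A} {b : A} {v : List A}

theorem prefix_getD {u s : List A} (h : u <+: s) {i : ℕ} (hi : i < u.length) :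
    u.getD i default = s.getD i default := by
  rw [List.getD_eq_getElem u default hi,
      List.getD_eq_getElem s default (hi.trans_le h.length_le)]
  exact List.IsPrefix.getElem h hi

theorem fpWord_eq (himm : ∀ j : ℕ, φ^[j] v ≠ []) {n i : ℕ}
    (hi : i < (fpPartial φ b v n).length) :
    (fpPartial φ b v n).getD i default = fpWord φ b v i := by
  have hi2 : i < (fpPartial φ b v (i+1)).length :=
    lt_of_lt_of_le (Nat.lt_succ_self i) (partial_len himm (i+1))
  unfold fpWord
  rcases Nat.le_total n (i+1) with h | h
  · exact (prefix_getD (partial_prefix h) hi).symm ▸ rfl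
  · exact prefix_getD (partial_prefix h) hi2 |>.symm

/-- a list agreeing pointwise with fpWord is a prefix of some fpPartial -/
theorem pointwise_prefix (himm : ∀ j : ℕ, φ^[j] v ≠ []) {u : List A}
    (hu : ∀ i (hi : i < u.length), u.getD i default = fpWord φ b v i) :
    u <+: fpPartial φ b v u.length := by
  have hl : u.length ≤ (fpPartial φ b v u.length).length := partial_len himm _
  have : u = (fpPartial φ b v u.length).take u.length := by
    apply List.ext_getElem
    · simp [Nat.min_eq_left hl]
    · intro i h1 h2
      have h3 : i < (fpPartial φ b v u.length).length := lt_of_lt_of_le h1 hl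
      rw [List.getElem_take]
      rw [← List.getD_eq_getElem u default h1, ← List.getD_eq_getElem _ default h3]
      rw [hu i h1, fpWord_eq himm h3]
  conv_lhs => rw [this]
  exact List.take_prefix _ _

theorem prefix_pointwise (himm : ∀ j : ℕ, φ^[j] v ≠ []) {u : List A} {n : ℕ}
    (h : u <+: fpPartial φ b v n) :
    ∀ i (hi : i < u.length), u.getD i default = fpWord φ b v i := by
  intro i hi
  rw [prefix_getD h hi]
  exact fpWord_eq himm (lt_of_lt_of_le hi h.length_le)

/-- applying φ to a pointwise prefix yields a pointwise prefix -/
theorem phi_pointwise (hφ : WordHom φ) (hb : φ [b] = b :: v)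
    (himm : ∀ j : ℕ, φ^[j] v ≠ []) {u : List A}
    (hu : ∀ i (hi : i < u.length), u.getD i default = fpWord φ b v i) :
    ∀ i (hi : i < (φ u).length), (φ u).getD i default = fpWord φ b v i := by
  have h1 : u <+: fpPartial φ b v u.length := pointwise_prefix himm hu
  have h2 : u <+: fpPartial φ b v (u.length + 1) :=
    h1.trans (partial_prefix (Nat.le_succ _))
  have h3 : φ u <+: fpPartial φ b v (u.length + 2) := by
    have := hom_prefix hφ h2
    rwa [phi_partial hφ hb] at this
  exact prefix_pointwise himm h3

end Word

section Per
variable {A : Type*} [Inhabited A] {f : ℕ → A}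

def PerF (f : ℕ → A) (p : ℕ) : Prop := ∀ i, f (i + p) = f i

theorem perF_mul {p : ℕ} (h : PerF f p) (k : ℕ) : PerF f (p * k) := by
  induction k with
  | zero => intro i; simp
  | succ k ih =>
      intro i
      rw [Nat.mul_succ, ← Nat.add_assoc]
      rw [h (i + p * k), ih i]

theorem perF_sub {p q : ℕ} (hp : PerF f p) (hq : PerF f q) (hle : q ≤ p) :
    PerF f (p - q) := by
  intro i
  have := hp i
  rw [← Nat.sub_add_cancel hle, ← Nat.add_assoc] at this
  rw [← this, hq (i + (p - q))]

theorem perF_mod {p : ℕ} (h : PerF f p) (hp : 0 < p) (i : ℕ) : f i = f (i % p) := by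
  conv_lhs => rw [show i = i % p + p * (i / p) from by rw [Nat.mod_add_div]]
  exact perF_mul h (i / p) (i % p)

theorem perF_min (hex : ∃ p, 0 < p ∧ PerF f p) :
    ∃ p, (0 < p ∧ PerF f p) ∧ ∀ q, 0 < q → PerF f q → p ∣ q := by
  classical
  refine ⟨Nat.find hex, Nat.find_spec hex, ?_⟩
  intro q hq0 hq
  set p := Nat.find hex with hpdef
  obtain ⟨hp0, hp⟩ := Nat.find_spec hex
  by_contra hdvd
  have hr0 : 0 < q % p := Nat.pos_of_ne_zero fun h => hdvd (Nat.dvd_of_mod_eq_zero h)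
  have hrlt : q % p < p := Nat.mod_lt _ hp0
  have hper : PerF f (q % p) := by
    have h1 : PerF f (p * (q / p)) := perF_mul hp _
    have h2 : p * (q / p) ≤ q := Nat.mul_div_le q p
    have h3 := perF_sub hq h1 h2
    have h4 : q - p * (q / p) = q % p := by
      have := Nat.mod_add_div q p
      omega
    rwa [h4] at h3
  exact absurd ⟨hr0, hper⟩ (Nat.find_min hex hrlt)

end Per

section Main
variable {A : Type*} [Inhabited A]

theorem wpow_getD {z : List A} (hz : z ≠ []) {k j : ℕ} (hj : j < k * z.length) :
    (wpow z k).getD j default = z.getD (j % z.length) default := by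
  induction k generalizing j with
  | zero => omega
  | succ k ih =>
      rw [wpow_succ]
      rcases Nat.lt_or_ge j z.length with h | h
      · rw [List.getD_append _ _ _ _ h, Nat.mod_eq_of_lt h]
      · have h1 : j - z.length < k * z.length := by
          have h2 : (k+1) * z.length = k * z.length + z.length := by
            rw [Nat.add_mul, Nat.one_mul]
          omega
        rw [List.getD_append_right _ _ _ _ h, ih h1]
        congr 1
        conv_rhs => rw [show j = j - z.length + z.length from by omega]
        rw [Nat.add_mod_right]

theorem hom_iter_prefix {φ : List A → List A} (hφ : WordHom φ) {u s : List A}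
    (h : u <+: s) (n : ℕ) : φ^[n] u <+: φ^[n] s := by
  induction n with
  | zero => exact h
  | succ n ih =>
      rw [Function.iterate_succ_apply', Function.iterate_succ_apply']
      exact hom_prefix hφ ih

end Main
theorem stmt_14 {A : Type*} [Inhabited A] [Fintype A]
    (φ : List A → List A) (hφ : WordHom φ)
    (b : A) (v : List A) (hv : v ≠ []) (hb : φ [b] = b :: v)
    (himm : ∀ j : ℕ, φ^[j] v ≠ []) :
    (∃ z : List A, z ≠ [] ∧ ∀ i, fpWord φ b v i = perW z i) ↔
    (∃ (z : List A) (m : ℕ), z ≠ [] ∧ z.head? = some b ∧ 2 ≤ m ∧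
      φ z = wpow z m ∧ ∀ i, fpWord φ b v i = perW z i) := by
  constructor
  · rintro ⟨z0, hz0, hz0w⟩
    set w := fpWord φ b v with hw
    have hw0 : w 0 = b := by
      have h1 : fpPartial φ b v 1 = [b] := by
        simp [fpPartial, List.range_succ, fpSeg]
      simp [hw, fpWord, h1]
    have hL0 : 0 < z0.length := List.length_pos_iff.mpr hz0
    have hex : ∃ p, 0 < p ∧ PerF w p := by
      refine ⟨z0.length, hL0, fun i => ?_⟩
      rw [hz0w (i + z0.length), hz0w i]
      unfold perW
      rw [Nat.add_mod_right]
    obtain ⟨p, ⟨hp0, hp⟩, hmin⟩ := perF_min hex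
    set z := (List.range p).map w with hzdef
    have hzlen : z.length = p := by simp [hzdef]
    have hzne : z ≠ [] := by
      intro h; rw [h] at hzlen; simp at hzlen; omega
    have hzget : ∀ j, j < p → z.getD j default = w j := by
      intro j hj
      rw [hzdef, List.getD_eq_getElem _ _ (by simpa using hj)]
      simp
    have hword : ∀ i, w i = perW z i := by
      intro i
      unfold perW
      rw [hzlen, hzget _ (Nat.mod_lt _ hp0), ← perF_mod hp hp0]
    have hwpow_pt : ∀ k i, i < (wpow z k).length → (wpow z k).getD i default = w i := by
      intro k i hi
      rw [wpow_length] at hi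
      rw [wpow_getD hzne hi, hzlen, hzget _ (Nat.mod_lt _ hp0), ← perF_mod hp hp0]
    obtain ⟨t, hzt⟩ : ∃ t, z = b :: t := by
      have hg : z.getD 0 default = w 0 := hzget 0 hp0
      cases hz : z with
      | nil => exact absurd hz hzne
      | cons a t =>
          rw [hz] at hg
          simp at hg
          exact ⟨t, by rw [hg, hw0]⟩
    have hzhead : z.head? = some b := by rw [hzt]; rfl
    set q := (φ z).length with hq
    have hsplit : φ z = (b :: v) ++ φ t := by
      rw [hzt, show b::t = [b]++t from rfl, hφ, hb]
    have hq2 : 2 ≤ q := by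
      rw [hq, hsplit]
      simp only [List.length_append, List.length_cons]
      have := List.length_pos_iff.mpr hv
      omega
    have hφzne : φ z ≠ [] := by
      intro h; rw [hq, h] at hq2; simp at hq2
    have hqper : PerF w q := by
      intro i
      set k := i + 2 with hk
      have hik : i + q < k * q := by
        have h1 : (i+1) * 1 ≤ (i+1) * q := Nat.mul_le_mul_left _ (by omega)
        have h2 : k * q = (i+1) * q + q := by rw [hk]; ring
        omega
      have h1 : ∀ j (hj : j < (φ (wpow z k)).length),
          (φ (wpow z k)).getD j default = w j :=
        phi_pointwise hφ hb himm (fun j hj => hwpow_pt k j hj)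
      rw [hom_wpow hφ] at h1
      have hlen : (wpow (φ z) k).length = k * q := by rw [wpow_length, hq]
      have e1 := h1 (i+q) (by rw [hlen]; exact hik)
      have e2 := h1 i (by rw [hlen]; nlinarith [hq2])
      rw [wpow_getD hφzne (by rw [← hq]; exact hik), ← hq] at e1
      rw [wpow_getD hφzne (by rw [← hq]; nlinarith [hq2]), ← hq] at e2
      rw [← e1, ← e2, Nat.add_mod_right]
    have hdvd : p ∣ q := hmin q (by omega) hqper
    obtain ⟨m, hm⟩ := hdvd
    have hm1 : 1 ≤ m := by
      rcases Nat.eq_zero_or_pos m with h | h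
      · rw [h, Nat.mul_zero] at hm; omega
      · exact h
    have hz_pt : ∀ j (hj : j < (φ z).length), (φ z).getD j default = w j :=
      phi_pointwise hφ hb himm (fun j hj => hzget j (by rwa [hzlen] at hj))
    have hphiz : φ z = wpow z m := by
      apply List.ext_getElem
      · rw [wpow_length, hzlen, ← hq, hm, Nat.mul_comm]
      · intro j h1 h2
        rw [← List.getD_eq_getElem _ default h1, ← List.getD_eq_getElem _ default h2,
            hz_pt j h1, hwpow_pt m j h2]
    have hm2 : 2 ≤ m := by
      by_contra hcon
      have hm1' : m = 1 := by omega
      rw [hm1'] at hphiz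
      have hzfix : φ z = z := by rw [hphiz]; simp [wpow]
      have hiter : ∀ n, φ^[n] z = z := by
        intro n
        induction n with
        | zero => rfl
        | succ n ih => rw [Function.iterate_succ_apply', ih, hzfix]
      have hpre : [b] <+: z := by rw [hzt]; exact ⟨t, rfl⟩
      have h2 := hom_iter_prefix hφ hpre p
      rw [hiter, iter_b hφ hb] at h2
      have h3 := h2.length_le
      have h4 : p + 1 ≤ (fpPartial φ b v (p+1)).length := partial_len himm (p+1)
      rw [hzlen] at h3
      omega
    exact ⟨z, m, hzne, hzhead, hm2, hphiz, hword⟩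
  · rintro ⟨z, m, hz, _, _, _, hzw⟩
    exact ⟨z, hz, hzw⟩
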